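/- Let X and Y be independent random variables on a probability space, each almost surely positive, with Lebesgue densities f_X and f_Y, and let Z = X/(X+Y) with density f_Z. Suppose there exist positive functions A, B on (0,∞) and constants θ > 0, p > 0 such that f_Y(s*x) = A(s) * B(x) * (1 + θ*s*x)^{-p} for all s, x > 0. Then for almost every s > 0: ∫_0^∞ x * B(x) * f_X(x) * (x + 1/(θ*s))^{-p} dx = ((θ*s)^p/(A(s)*(s+1)^2)) * f_Z(1/(s+1)). -/

import Mathlib

open MeasureTheory ProbabilityTheory Real Set

open scoped ENNReal

/-- One-dimensional change of variables for Lebesgue integrals. -/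
lemma lintegral_image_eq_lintegral_abs_deriv_mul' {s : Set ℝ} {f f' : ℝ → ℝ}
    (hs : MeasurableSet s) (hf' : ∀ x ∈ s, HasDerivWithinAt f (f' x) s x)
    (hf : Set.InjOn f s) (g : ℝ → ℝ≥0∞) :
    ∫⁻ x in f '' s, g x = ∫⁻ x in s, ENNReal.ofReal |f' x| * g (f x) := by
  simpa only [ContinuousLinearMap.det_toSpanSingleton] using
    lintegral_image_eq_lintegral_abs_det_fderiv_mul volume hs
      (fun x hx => (hf' x hx).hasFDerivWithinAt) hf g

theorem theorem_three
    {Ω : Type*} [MeasurableSpace Ω] (P : Measure Ω) [IsProbabilityMeasure P]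
    (X Y : Ω → ℝ) (hXm : Measurable X) (hYm : Measurable Y)
    (hindep : IndepFun X Y P)
    (hXpos : ∀ᵐ ω ∂P, 0 < X ω) (hYpos : ∀ᵐ ω ∂P, 0 < Y ω)
    (fX fY fZ A B : ℝ → ℝ)
    (hfXm : Measurable fX) (hfYm : Measurable fY) (hfZm : Measurable fZ)
    (hfX0 : ∀ x, 0 ≤ fX x) (hfY0 : ∀ y, 0 ≤ fY y) (hfZ0 : ∀ z, 0 ≤ fZ z)
    (hX : P.map X = volume.withDensity (fun x => ENNReal.ofReal (fX x)))
    (hY : P.map Y = volume.withDensity (fun y => ENNReal.ofReal (fY y)))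
    (hZ : P.map (fun ω => X ω / (X ω + Y ω)) =
      (volume.restrict (Ioo 0 1)).withDensity (fun z => ENNReal.ofReal (fZ z)))
    (θ p : ℝ) (hθ : 0 < θ) (hp : 0 < p)
    (hA : ∀ s ∈ Ioi (0:ℝ), 0 < A s) (hB : ∀ x ∈ Ioi (0:ℝ), 0 < B x)
    (hdecomp : ∀ s ∈ Ioi (0:ℝ), ∀ x ∈ Ioi (0:ℝ),
      fY (s * x) = A s * B x * (1 + θ * s * x) ^ (-p)) :
    ∀ᵐ s ∂(volume.restrict (Ioi (0:ℝ))),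
      ∫ x in Ioi (0:ℝ), x * B x * fX x * (x + 1 / (θ * s)) ^ (-p) =
        ((θ * s) ^ p / (A s * (s + 1) ^ 2)) * fZ (1 / (s + 1)) := by
  set fX' : ℝ → ℝ≥0∞ := fun x => ENNReal.ofReal (fX x) with hfX'def
  set fY' : ℝ → ℝ≥0∞ := fun y => ENNReal.ofReal (fY y) with hfY'def
  set fZ' : ℝ → ℝ≥0∞ := fun z => ENNReal.ofReal (fZ z) with hfZ'def
  have hfX'm : Measurable fX' := hfXm.ennreal_ofReal
  have hfY'm : Measurable fY' := hfYm.ennreal_ofReal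
  have hfZ'm : Measurable fZ' := hfZm.ennreal_ofReal
  set T : Ω → ℝ := fun ω => Y ω / X ω with hTdef
  have hTm : Measurable T := hYm.div hXm
  set G : ℝ → ℝ≥0∞ :=
    fun s => ∫⁻ x in Ioi (0:ℝ), fX' x * (ENNReal.ofReal x * fY' (x * s)) with hGdef
  set H : ℝ → ℝ≥0∞ :=
    fun s => ENNReal.ofReal |(-1 / (1 + s) ^ 2)| * fZ' ((1 + s)⁻¹) with hHdef
  -- joint law
  have hjoint : P.map (fun ω => (X ω, Y ω)) =
      (volume.withDensity fX').prod (volume.withDensity fY') := by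
    rw [← hX, ← hY]
    exact (indepFun_iff_map_prod_eq_prod_map_map hXm.aemeasurable hYm.aemeasurable).mp hindep
  -- fX vanishes a.e. on nonpositive reals
  have hfXnull : ∀ᵐ x ∂(volume.restrict (Iic (0:ℝ))), fX' x = 0 := by
    have h0 : (volume.withDensity fX') (Iic 0) = 0 := by
      rw [← hX, Measure.map_apply hXm measurableSet_Iic]
      exact measure_mono_null (fun ω (h : X ω ∈ Iic 0) => not_lt.mpr h) (ae_iff.mp hXpos)
    rw [withDensity_apply _ measurableSet_Iic] at h0
    exact (lintegral_eq_zero_iff hfX'm).mp h0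
  -- Law of T computed from the joint density
  have hmapT : ∀ E : Set ℝ, MeasurableSet E → (P.map T) E = ∫⁻ s in E, G s := by
    intro E hE
    have hS : MeasurableSet {q : ℝ × ℝ | q.2 / q.1 ∈ E} := (measurable_snd.div measurable_fst) hE
    have hFm : Measurable fun x =>
        (volume.withDensity fY') (Prod.mk x ⁻¹' {q : ℝ × ℝ | q.2 / q.1 ∈ E}) :=
      measurable_measure_prodMk_left hS
    rw [Measure.map_apply hTm hE,
      show T ⁻¹' E = (fun ω => (X ω, Y ω)) ⁻¹' {q : ℝ × ℝ | q.2 / q.1 ∈ E} from rfl,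
      ← Measure.map_apply (hXm.prodMk hYm) hS, hjoint, Measure.prod_apply hS,
      lintegral_withDensity_eq_lintegral_mul _ hfX'm hFm]
    simp only [Pi.mul_apply]
    rw [← lintegral_add_compl
      (fun x => fX' x * (volume.withDensity fY') (Prod.mk x ⁻¹' {q : ℝ × ℝ | q.2 / q.1 ∈ E}))
      measurableSet_Ioi]
    have hcompl : ∫⁻ x in (Ioi (0:ℝ))ᶜ,
        fX' x * (volume.withDensity fY') (Prod.mk x ⁻¹' {q : ℝ × ℝ | q.2 / q.1 ∈ E}) = 0 := by
      rw [compl_Ioi]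
      calc ∫⁻ x in Iic (0:ℝ),
            fX' x * (volume.withDensity fY') (Prod.mk x ⁻¹' {q : ℝ × ℝ | q.2 / q.1 ∈ E})
          = ∫⁻ _ in Iic (0:ℝ), 0 := by
            refine lintegral_congr_ae ?_
            filter_upwards [hfXnull] with x hx
            simp [hx]
        _ = 0 := lintegral_zero
    rw [hcompl, add_zero]
    have hmain : ∫⁻ x in Ioi (0:ℝ),
        fX' x * (volume.withDensity fY') (Prod.mk x ⁻¹' {q : ℝ × ℝ | q.2 / q.1 ∈ E})
        = ∫⁻ x in Ioi (0:ℝ), ∫⁻ s in E, fX' x * (ENNReal.ofReal x * fY' (x * s)) := by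
      refine setLIntegral_congr_fun measurableSet_Ioi (fun x hx => ?_)
      have hx0 : (0:ℝ) < x := hx
      have hsec : Prod.mk x ⁻¹' {q : ℝ × ℝ | q.2 / q.1 ∈ E} = (fun y => y / x) ⁻¹' E := rfl
      have himg : (fun y => y / x) ⁻¹' E = (fun s => x * s) '' E := by
        ext y
        constructor
        · intro hy
          exact ⟨y / x, hy, by field_simp⟩
        · rintro ⟨s, hs, rfl⟩
          simpa [mul_div_cancel_left₀ _ (ne_of_gt hx0)] using hs
      rw [hsec, withDensity_apply _
        (show MeasurableSet ((fun y => y / x) ⁻¹' E) from (measurable_id.div_const x) hE), himg,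
        lintegral_image_eq_lintegral_abs_deriv_mul' hE
          (fun s _ => by
            simpa using ((hasDerivAt_id s).const_mul x).hasDerivWithinAt)
          (fun s _ t _ h => mul_left_cancel₀ (ne_of_gt hx0) h) fY']
      rw [← lintegral_const_mul _ (by
        exact (ENNReal.measurable_ofReal.comp measurable_const).mul
          ((hfYm.comp (measurable_const_mul x)).ennreal_ofReal))]
      refine setLIntegral_congr_fun hE (fun s _ => ?_)
      rw [abs_of_pos hx0]
    rw [hmain]
    have hum : Measurable (Function.uncurry fun x s : ℝ =>
        fX' x * (ENNReal.ofReal x * fY' (x * s))) :=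
      ((hfXm.comp measurable_fst).ennreal_ofReal.mul
        ((measurable_fst.ennreal_ofReal).mul
          ((hfYm.comp (measurable_fst.mul measurable_snd)).ennreal_ofReal)))
    rw [lintegral_lintegral_swap hum.aemeasurable]
  -- Law of T computed from the density of Z
  have hmapT2 : ∀ E : Set ℝ, MeasurableSet E →
      (P.map T) E = ∫⁻ s in E ∩ Ioi (0:ℝ), H s := by
    intro E hE
    have hψm : Measurable fun z : ℝ => z⁻¹ - 1 := measurable_inv.sub measurable_const
    have hTae : T =ᵐ[P] fun ω => (X ω / (X ω + Y ω))⁻¹ - 1 := by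
      filter_upwards [hXpos, hYpos] with ω hx hy
      have hx0 : X ω ≠ 0 := ne_of_gt hx
      have hxy : X ω + Y ω ≠ 0 := ne_of_gt (add_pos hx hy)
      show Y ω / X ω = (X ω / (X ω + Y ω))⁻¹ - 1
      field_simp
      ring
    have hmapeq : P.map T =
        ((volume.restrict (Ioo 0 1)).withDensity fZ').map fun z => z⁻¹ - 1 := by
      rw [Measure.map_congr hTae, ← hZ, Measure.map_map hψm (show Measurable (fun ω => X ω / (X ω + Y ω)) from hXm.div (hXm.add hYm))]
      rfl
    rw [hmapeq, Measure.map_apply hψm hE, withDensity_apply _ (hψm hE),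
      Measure.restrict_restrict (hψm hE)]
    have himg : (fun z : ℝ => z⁻¹ - 1) ⁻¹' E ∩ Ioo 0 1 =
        (fun s : ℝ => (1 + s)⁻¹) '' (E ∩ Ioi 0) := by
      ext z
      constructor
      · rintro ⟨hzE, hz0, hz1⟩
        refine ⟨z⁻¹ - 1, ⟨hzE, ?_⟩, ?_⟩
        · have : (1:ℝ) < z⁻¹ := (one_lt_inv_iff₀).mpr ⟨hz0, hz1⟩
          simpa [mem_Ioi] using sub_pos.mpr this
        · have hz0' : z ≠ 0 := ne_of_gt hz0
          field_simp
          ring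
      · rintro ⟨s, ⟨hsE, hs⟩, rfl⟩
        have hs0 : (0:ℝ) < s := hs
        have h1s : (0:ℝ) < 1 + s := by linarith
        refine ⟨?_, inv_pos.mpr h1s, ?_⟩
        · show ((1 + s)⁻¹)⁻¹ - 1 ∈ E
          rw [inv_inv]
          simpa using hsE
        · rw [inv_lt_one_iff₀]
          right
          linarith
    rw [himg, lintegral_image_eq_lintegral_abs_deriv_mul' (hE.inter measurableSet_Ioi)
      (fun s hs => by
        have h1s : (1:ℝ) + s ≠ 0 := by
          have : (0:ℝ) < s := hs.2
          positivity
        exact (((hasDerivAt_id' s).const_add 1).inv h1s).hasDerivWithinAt)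
      (fun a _ b _ h => by
        have := inv_inj.mp h
        linarith) fZ']
  -- the two densities agree a.e.
  have hGm : Measurable G := by
    refine Measurable.lintegral_prod_right ?_
    exact ((hfXm.comp measurable_snd).ennreal_ofReal.mul
      ((measurable_snd.ennreal_ofReal).mul
        ((hfYm.comp (measurable_snd.mul measurable_fst)).ennreal_ofReal)))
  have hHm : Measurable H := by
    refine Measurable.mul (f := fun s => ENNReal.ofReal |(-1 / (1 + s) ^ 2)|) (g := fun s => fZ' ((1 + s)⁻¹)) ?_ ?_
    · exact ((measurable_const.div
        (((measurable_const.add measurable_id).pow_const 2))).abs).ennreal_ofReal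
    · exact hfZ'm.comp (measurable_const.add measurable_id).inv
  have hGH : G =ᵐ[volume.restrict (Ioi (0:ℝ))] H := by
    have heq : (volume.restrict (Ioi (0:ℝ))).withDensity G =
        (volume.restrict (Ioi (0:ℝ))).withDensity H := by
      refine Measure.ext fun E hE => ?_
      calc ((volume.restrict (Ioi (0:ℝ))).withDensity G) E
          = ∫⁻ s in E ∩ Ioi 0, G s := by
            rw [withDensity_apply _ hE, Measure.restrict_restrict hE]
        _ = (P.map T) (E ∩ Ioi 0) := (hmapT _ (hE.inter measurableSet_Ioi)).symm
        _ = ∫⁻ s in (E ∩ Ioi 0) ∩ Ioi 0, H s := hmapT2 _ (hE.inter measurableSet_Ioi)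
        _ = ∫⁻ s in E ∩ Ioi 0, H s := by rw [inter_assoc, inter_self]
        _ = ((volume.restrict (Ioi (0:ℝ))).withDensity H) E := by
            rw [withDensity_apply _ hE, Measure.restrict_restrict hE]
    exact (withDensity_eq_iff_of_sigmaFinite hGm.aemeasurable hHm.aemeasurable).mp heq
  -- conclusion
  filter_upwards [hGH, ae_restrict_mem measurableSet_Ioi] with s hGHs hs
  have hs0 : (0:ℝ) < s := hs
  have hθs : (0:ℝ) < θ * s := mul_pos hθ hs0
  have hAs : 0 < A s := hA s hs
  set c : ℝ := A s * (θ * s) ^ (-p) with hcdef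
  have hc : 0 < c := mul_pos hAs (rpow_pos_of_pos hθs _)
  set k : ℝ → ℝ := fun x => x * B x * fX x * (x + 1 / (θ * s)) ^ (-p) with hkdef
  -- pointwise identity on (0, ∞)
  have hpoint : ∀ x ∈ Ioi (0:ℝ),
      fX' x * (ENNReal.ofReal x * fY' (x * s)) = ENNReal.ofReal c * ENNReal.ofReal (k x) := by
    intro x hx
    have hx0 : (0:ℝ) < x := hx
    have hreal : fX x * (x * fY (x * s)) = c * k x := by
      have h1 : fY (x * s) = A s * B x * (1 + θ * s * x) ^ (-p) := by
        rw [mul_comm x s]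
        exact hdecomp s hs x hx
      have h2 : (1 + θ * s * x : ℝ) = (θ * s) * (x + 1 / (θ * s)) := by
        field_simp
        ring
      have h3 : ((1 + θ * s * x : ℝ)) ^ (-p) =
          (θ * s) ^ (-p) * (x + 1 / (θ * s)) ^ (-p) := by
        rw [h2, Real.mul_rpow hθs.le (by positivity)]
      rw [h1, h3, hcdef, hkdef]
      ring
    calc fX' x * (ENNReal.ofReal x * fY' (x * s))
        = ENNReal.ofReal (fX x * (x * fY (x * s))) := by
          rw [ENNReal.ofReal_mul (hfX0 x), ENNReal.ofReal_mul hx0.le]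
      _ = ENNReal.ofReal (c * k x) := by rw [hreal]
      _ = ENNReal.ofReal c * ENNReal.ofReal (k x) := ENNReal.ofReal_mul hc.le
  set L : ℝ≥0∞ := ∫⁻ x in Ioi (0:ℝ), ENNReal.ofReal (k x) with hLdef
  have hGs : G s = ENNReal.ofReal c * L := by
    rw [hGdef]
    simp only
    rw [setLIntegral_congr_fun measurableSet_Ioi hpoint]
    exact lintegral_const_mul' _ _ ENNReal.ofReal_ne_top
  have hLval : L = (ENNReal.ofReal c)⁻¹ * H s := by
    rw [← hGHs, hGs, ← mul_assoc,
      ENNReal.inv_mul_cancel (by simpa using hc) ENNReal.ofReal_ne_top, one_mul]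
  -- nonnegativity and measurability of k
  have hk0 : 0 ≤ᵐ[volume.restrict (Ioi (0:ℝ))] k := by
    filter_upwards [ae_restrict_mem measurableSet_Ioi] with x hx
    have hx0 : (0:ℝ) < x := hx
    have hBx : 0 < B x := hB x hx
    have : (0:ℝ) < x + 1 / (θ * s) := by positivity
    have := hfX0 x
    positivity
  have hkm : AEStronglyMeasurable k (volume.restrict (Ioi (0:ℝ))) := by
    have hkt : Measurable fun x : ℝ =>
        x * (fY x * (A 1)⁻¹ * Real.exp (Real.log (1 + θ * x) * p)) * fX x *
          Real.exp (Real.log (x + 1 / (θ * s)) * (-p)) :=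
      ((measurable_id.mul ((hfYm.mul measurable_const).mul
        (Real.measurable_exp.comp ((Real.measurable_log.comp
          (measurable_const.add (measurable_const.mul measurable_id))).mul
          measurable_const)))).mul hfXm).mul
        (Real.measurable_exp.comp ((Real.measurable_log.comp
          (measurable_id.add_const _)).mul measurable_const))
    refine (hkt.aestronglyMeasurable).congr ?_
    refine (ae_restrict_iff' measurableSet_Ioi).mpr (ae_of_all _ fun x hx => ?_)
    have hx0 : (0:ℝ) < x := hx
    have hBx : B x = fY x * (A 1)⁻¹ * Real.exp (Real.log (1 + θ * x) * p) := by
      have h1 : fY (1 * x) = A 1 * B x * (1 + θ * 1 * x) ^ (-p) :=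
        hdecomp 1 (by norm_num) x hx
      have hA1 : 0 < A 1 := hA 1 (by norm_num)
      have hb : (0:ℝ) < 1 + θ * x := by positivity
      have hpow : (0:ℝ) < (1 + θ * x) ^ p := rpow_pos_of_pos hb _
      rw [one_mul, mul_one, Real.rpow_neg hb.le] at h1
      rw [← Real.rpow_def_of_pos hb, h1]
      field_simp
    have hpow2 : (x + 1 / (θ * s)) ^ (-p) = Real.exp (Real.log (x + 1 / (θ * s)) * (-p)) :=
      Real.rpow_def_of_pos (by positivity) _
    rw [hkdef]
    simp only
    rw [hBx, hpow2]
  -- compute the Bochner integral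
  rw [integral_eq_lintegral_of_nonneg_ae hk0 hkm]
  have habs : |(-1 / (1 + s) ^ 2 : ℝ)| = ((1 + s) ^ 2)⁻¹ := by
    rw [abs_div, abs_neg, abs_one, abs_of_pos (by positivity : (0:ℝ) < (1 + s) ^ 2)]
    exact one_div _
  have hHtoReal : (H s).toReal = ((1 + s) ^ 2)⁻¹ * fZ ((1 + s)⁻¹) := by
    rw [hHdef]
    simp only [hfZ'def]
    rw [ENNReal.toReal_mul, ENNReal.toReal_ofReal (abs_nonneg _),
      ENNReal.toReal_ofReal (hfZ0 _), habs]
  have hLtoReal : L.toReal = c⁻¹ * (((1 + s) ^ 2)⁻¹ * fZ ((1 + s)⁻¹)) := by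
    rw [hLval, ENNReal.toReal_mul, ENNReal.toReal_inv, ENNReal.toReal_ofReal hc.le, hHtoReal]
  rw [← hLdef, hLtoReal]
  have hc' : c⁻¹ = (A s)⁻¹ * (θ * s) ^ p := by
    rw [hcdef, mul_inv, Real.rpow_neg hθs.le, inv_inv]
  rw [hc']
  have h1 : (1 + s) = (s + 1) := by ring
  rw [h1, one_div]
  have hpow : (0:ℝ) < (θ * s) ^ p := rpow_pos_of_pos hθs _
  field_simp
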